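/- arXiv:2009.09146 — 6 statements merged into one kernel-verified Lean document; each statement's English description precedes it below -/
import Mathlib

section
/- The determinant of a square Cauchy matrix equals the product formula: det [1/(a_i - b_j)]_{i,j=1}^s = (∏_{i<j} (a_j - a_i)(b_i - b_j)) / (∏_{i,j} (a_i - b_j)). -/
open Matrix Polynomial Finset

lemma offdiag_prod {F : Type*} [CommRing F] {s : ℕ} (f : Fin s → Fin s → F) :
    ∏ j, ∏ k ∈ univ.erase j, f j k =
      (∏ i, ∏ j ∈ Ioi i, f i j) * (∏ i, ∏ j ∈ Ioi i, f j i) := by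
  have h := Finset.prod_prod_Ioi_mul_eq_prod_prod_off_diag (fun x y => f y x)
  simp only [Finset.compl_singleton] at h
  rw [← Finset.prod_mul_distrib]
  simp_rw [← Finset.prod_mul_distrib]
  convert h.symm using 2 with i _

/-- Cauchy determinant formula. -/
theorem cauchy_det_formula {F : Type*} [Field F] {s : ℕ}
    (a b : Fin s → F)
    (ha : Function.Injective a) (hb : Function.Injective b)
    (hab : ∀ i j, a i ≠ b j)
    (M : Matrix (Fin s) (Fin s) F) (hM : ∀ i j, M i j = (a i - b j)⁻¹) :
    M.det =
      (∏ i : Fin s, ∏ j : Fin s, if i < j then (a j - a i) * (b i - b j) else 1) /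
        (∏ i : Fin s, ∏ j : Fin s, (a i - b j)) := by
  set p : Fin s → F[X] := fun j => ∏ k ∈ univ.erase j, (X - C (b k)) with hp
  have hdeg : ∀ j : Fin s, (p j).natDegree < s := by
    intro j
    have h1 : (p j).natDegree = s - 1 := by
      rw [hp, Polynomial.natDegree_prod_of_monic _ _ (fun k _ => monic_X_sub_C (b k))]
      simp [Finset.card_erase_of_mem]
    have := j.pos
    omega
  set T : Matrix (Fin s) (Fin s) F := Matrix.of fun m j => (p j).coeff m with hT
  have heval : ∀ (v : Fin s → F) (i j : Fin s),
      (vandermonde v * T) i j = ∏ k ∈ univ.erase j, (v i - b k) := by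
    intro v i j
    have h2 := Polynomial.eval_eq_sum_range' (hdeg j) (v i)
    rw [← Fin.sum_univ_eq_sum_range] at h2
    simp only [Matrix.mul_apply, vandermonde_apply, hT, Matrix.of_apply]
    calc ∑ x : Fin s, v i ^ (x : ℕ) * (p j).coeff x
        = eval (v i) (p j) := by
          rw [h2]; exact Finset.sum_congr rfl fun x _ => mul_comm _ _
      _ = ∏ k ∈ univ.erase j, (v i - b k) := by simp [hp, Polynomial.eval_prod]
  have hbT : vandermonde b * T = Matrix.diagonal (fun j => ∏ k ∈ univ.erase j, (b j - b k)) := by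
    ext i j
    rw [heval]
    rcases eq_or_ne i j with rfl | hij
    · simp
    · rw [Matrix.diagonal_apply_ne _ hij]
      exact Finset.prod_eq_zero (Finset.mem_erase.2 ⟨hij, Finset.mem_univ i⟩) (by simp)
  have hVb : (vandermonde b).det ≠ 0 := Matrix.det_vandermonde_ne_zero_iff.2 hb
  have hVb' : (∏ i, ∏ j ∈ Ioi i, (b j - b i)) ≠ 0 := by
    rw [← Matrix.det_vandermonde]; exact hVb
  have hdetT : T.det = ∏ i, ∏ j ∈ Ioi i, (b i - b j) := by
    have h3 : (vandermonde b).det * T.det = ∏ j, ∏ k ∈ univ.erase j, (b j - b k) := by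
      rw [← Matrix.det_mul, hbT, Matrix.det_diagonal]
    rw [offdiag_prod (fun j k => b j - b k), Matrix.det_vandermonde] at h3
    exact mul_right_cancel₀ hVb' (by linear_combination h3)
  have hMeq : M = Matrix.diagonal (fun i => (∏ k, (a i - b k))⁻¹) * (vandermonde a * T) := by
    ext i j
    have herase : (∏ k ∈ univ.erase j, (a i - b k)) ≠ 0 :=
      Finset.prod_ne_zero_iff.2 fun k _ => sub_ne_zero.2 (hab i k)
    rw [Matrix.diagonal_mul, heval, hM,
      ← Finset.mul_prod_erase univ (fun k => a i - b k) (Finset.mem_univ j),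
      mul_inv, mul_assoc, inv_mul_cancel₀ herase, mul_one]
  have hP : (∏ i : Fin s, ∏ j : Fin s, (a i - b j)) ≠ 0 :=
    Finset.prod_ne_zero_iff.2 fun i _ =>
      Finset.prod_ne_zero_iff.2 fun j _ => sub_ne_zero.2 (hab i j)
  have hdetM : M.det = (∏ i, (∏ k, (a i - b k))⁻¹) * ((vandermonde a).det * T.det) := by
    rw [hMeq, Matrix.det_mul, Matrix.det_mul, Matrix.det_diagonal]
  have hnum : (∏ i : Fin s, ∏ j : Fin s, if i < j then (a j - a i) * (b i - b j) else 1)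
      = (∏ i, ∏ j ∈ Ioi i, (a j - a i)) * (∏ i, ∏ j ∈ Ioi i, (b i - b j)) := by
    rw [← Finset.prod_mul_distrib]
    simp_rw [← Finset.prod_mul_distrib]
    refine Finset.prod_congr rfl fun i _ => ?_
    rw [← Finset.prod_filter, Finset.filter_lt_eq_Ioi]
  rw [hdetM, hdetT, hnum, Matrix.det_vandermonde, Finset.prod_inv_distrib]
  field_simp
end

section
/- Let s, t, r be natural numbers with t - s < r ≤ t, and let A be an s×t Cauchy matrix over GF(q) (entries 1/(a_i - b_j) with all s+t parameters distinct). Form the t×(s+r) matrix M^T whose first s rows are the rows of A transposed appropriately, i.e., M is the (s+r)×t matrix obtained by stacking A on top of the block [-I_r | 0_{r×(t-r)}]. Then every t columns of M^T (equivalently, every t rows of M) are linearly independent. -/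
open Polynomial Finset

/-- A left-kernel vector of a (possibly rectangular, with at least as many columns
as rows) Cauchy matrix vanishes. Proved via the interpolation argument. -/
lemma cauchy_left_kernel {F : Type*} [Field F] {ι κ : Type*} [DecidableEq ι]
    (I : Finset ι) (J : Finset κ) (a : ι → F) (b : κ → F)
    (ha : Set.InjOn a I) (hb : Set.InjOn b J)
    (hab : ∀ i ∈ I, ∀ j ∈ J, a i ≠ b j) (hcard : I.card ≤ J.card)
    (c : ι → F) (h : ∀ j ∈ J, ∑ i ∈ I, c i * (a i - b j)⁻¹ = 0) :
    ∀ i ∈ I, c i = 0 := by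
  intro i₀ hi₀
  set P : F[X] := ∑ i ∈ I, C (c i) * ∏ i' ∈ I.erase i, (C (a i') - X) with hPdef
  have hne : ∀ i ∈ I, ∀ j ∈ J, a i - b j ≠ 0 := fun i hi j hj => sub_ne_zero.mpr (hab i hi j hj)
  have heval : ∀ j ∈ J, P.eval (b j) = 0 := by
    intro j hj
    have key : P.eval (b j) = (∑ i ∈ I, c i * (a i - b j)⁻¹) * ∏ i ∈ I, (a i - b j) := by
      rw [hPdef, eval_finset_sum, Finset.sum_mul]
      refine Finset.sum_congr rfl fun i hi => ?_
      rw [eval_mul, eval_C, eval_prod]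
      simp only [eval_sub, eval_C, eval_X]
      rw [mul_assoc]
      congr 1
      rw [← Finset.mul_prod_erase I (fun i' => a i' - b j) hi,
        inv_mul_cancel_left₀ (hne i hi j hj)]
    rw [key, h j hj, zero_mul]
  have hP0 : P = 0 := by
    apply Polynomial.eq_zero_of_natDegree_lt_card_of_eval_eq_zero P
      (f := fun j : {x // x ∈ J} => b j)
      (fun x y hxy => Subtype.ext (hb x.2 y.2 hxy)) (fun j => heval j j.2)
    have hd : P.natDegree ≤ I.card - 1 := by
      apply Polynomial.natDegree_sum_le_of_forall_le
      intro i hi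
      refine le_trans (natDegree_mul_le) ?_
      rw [natDegree_C, zero_add]
      refine le_trans (natDegree_prod_le _ _) ?_
      have : ∀ i' ∈ I.erase i, (C (a i') - X).natDegree ≤ 1 := by
        intro i' _
        rw [show Polynomial.C (a i') - X = -(X - Polynomial.C (a i')) from (neg_sub _ _).symm,
          natDegree_neg, natDegree_X_sub_C]
      refine le_trans (Finset.sum_le_sum this) ?_
      rw [Finset.sum_const, smul_eq_mul, mul_one, Finset.card_erase_of_mem hi]
    have hpos : 1 ≤ I.card := Finset.card_pos.mpr ⟨i₀, hi₀⟩
    have : Fintype.card {x // x ∈ J} = J.card := Fintype.card_coe J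
    omega
  have h0 : P.eval (a i₀) = 0 := by rw [hP0, eval_zero]
  rw [hPdef, eval_finset_sum] at h0
  rw [Finset.sum_eq_single_of_mem i₀ hi₀ (fun i hi hne' => ?_)] at h0
  · rw [eval_mul, eval_C, eval_prod] at h0
    simp only [eval_sub, eval_C, eval_X] at h0
    have hprod : (∏ i' ∈ I.erase i₀, (a i' - a i₀)) ≠ 0 := by
      rw [Finset.prod_ne_zero_iff]
      intro i' hi'
      rcases Finset.mem_erase.mp hi' with ⟨hne'', hmem⟩
      exact sub_ne_zero.mpr fun hEq => hne'' (ha hmem hi₀ hEq)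
    exact (mul_eq_zero.mp h0).resolve_right hprod
  · rw [eval_mul, eval_prod]
    simp only [eval_sub, eval_C, eval_X]
    rw [Finset.prod_eq_zero (Finset.mem_erase.mpr ⟨hne'.symm, hi₀⟩) (sub_self (a i₀)), mul_zero]

/-- Lemma 1 (core): stacking an s×t Cauchy matrix over [-I_r | 0] yields a matrix
in which every t rows are linearly independent (every t×t row-submatrix is invertible). -/
theorem cauchy_stack_rows_invertible {F : Type*} [Field F] {s t r : ℕ}
    (hts : t - s < r) (hrt : r ≤ t)
    (a : Fin s → F) (b : Fin t → F)
    (ha : Function.Injective a) (hb : Function.Injective b)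
    (hab : ∀ i j, a i ≠ b j)
    (M : Matrix (Fin s ⊕ Fin r) (Fin t) F)
    (hMA : ∀ (i : Fin s) (j : Fin t), M (Sum.inl i) j = (a i - b j)⁻¹)
    (hMB : ∀ (i : Fin r) (j : Fin t), M (Sum.inr i) j = if (j : ℕ) = (i : ℕ) then -1 else 0)
    (τ : Fin t → Fin s ⊕ Fin r) (hτ : Function.Injective τ) :
    IsUnit (M.submatrix τ id) := by
  classical
  rw [← Matrix.vecMul_injective_iff_isUnit]
  suffices hker : ∀ c : Fin t → F, Matrix.vecMul c (M.submatrix τ id) = 0 → c = 0 by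
    intro x y hxy
    have hxy' : Matrix.vecMul x (M.submatrix τ id) = Matrix.vecMul y (M.submatrix τ id) := hxy
    have hsub : Matrix.vecMul (x - y) (M.submatrix τ id) = 0 := by
      rw [Matrix.sub_vecMul, hxy', sub_self]
    exact sub_eq_zero.mp (hker _ hsub)
  intro c hc
  have hc' : ∀ j : Fin t, ∑ k : Fin t, c k * M (τ k) j = 0 := by
    intro j
    have := congrFun hc j
    simpa [Matrix.vecMul, Matrix.submatrix, dotProduct] using this
  -- the chosen Cauchy rows / identity rows
  set I : Finset (Fin t) := univ.filter (fun k => (τ k).isLeft) with hI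
  set Free : Finset (Fin t) := univ.filter
    (fun j => ∀ k, ∀ i : Fin r, τ k = Sum.inr i → (j : ℕ) ≠ (i : ℕ)) with hFree
  set aa : Fin t → F := fun k => Sum.elim a (fun _ => (0 : F)) (τ k) with haa
  -- step 1: c vanishes on I
  have hstep1 : ∀ k ∈ I, c k = 0 := by
    apply cauchy_left_kernel I Free aa b
    · -- InjOn aa I
      intro k hk k' hk' hEq
      rcases Sum.isLeft_iff.mp (Finset.mem_filter.mp hk).2 with ⟨i, hi⟩
      rcases Sum.isLeft_iff.mp (Finset.mem_filter.mp hk').2 with ⟨i', hi'⟩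
      rw [haa] at hEq
      simp only [hi, hi', Sum.elim_inl] at hEq
      exact hτ (by rw [hi, hi', ha hEq])
    · exact fun x _ y _ hxy => hb hxy
    · intro i hi j _
      rcases Sum.isLeft_iff.mp (Finset.mem_filter.mp hi).2 with ⟨i', hi'⟩
      rw [haa]; simp only [hi', Sum.elim_inl]; exact hab i' j
    · -- card I ≤ card Free
      set R : Finset (Fin t) := univ.filter (fun k => ¬ (τ k).isLeft) with hR
      have hIR : I.card + R.card = t := by
        rw [hI, hR, Finset.card_filter_add_card_filter_not, Finset.card_univ,
          Fintype.card_fin]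
      set NF : Finset (Fin t) := univ.filter
        (fun j => ¬ ∀ k, ∀ i : Fin r, τ k = Sum.inr i → (j : ℕ) ≠ (i : ℕ)) with hNF
      have hFNF : Free.card + NF.card = t := by
        rw [hFree, hNF, Finset.card_filter_add_card_filter_not, Finset.card_univ,
          Fintype.card_fin]
      have hNFR : NF.card ≤ R.card := by
        have hch : ∀ j ∈ NF, ∃ k, ∃ i : Fin r, τ k = Sum.inr i ∧ (j : ℕ) = (i : ℕ) := by
          intro j hj
          have := (Finset.mem_filter.mp hj).2
          push_neg at this
          exact this
        set φ : Fin t → Fin t := fun j =>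
          if h : ∃ k, ∃ i : Fin r, τ k = Sum.inr i ∧ (j : ℕ) = (i : ℕ) then h.choose else j
          with hφ
        apply Finset.card_le_card_of_injOn φ
        · intro j hj
          have h := hch j hj
          rw [hφ]; simp only [dif_pos h]
          obtain ⟨i, hi, -⟩ := h.choose_spec
          exact Finset.mem_filter.mpr ⟨Finset.mem_univ _, by rw [hi]; simp⟩
        · intro j hj j' hj' hEq
          have h := hch j hj
          have h' := hch j' hj'
          rw [hφ] at hEq
          simp only [dif_pos h, dif_pos h'] at hEq
          obtain ⟨i, hi, hji⟩ := h.choose_spec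
          obtain ⟨i', hi', hji'⟩ := h'.choose_spec
          rw [hEq] at hi
          rw [hi] at hi'
          have : i = i' := Sum.inr_injective hi'
          exact Fin.ext (by rw [hji, hji', this])
      omega
    · -- kernel equations on free columns
      intro j hj
      have hfree := (Finset.mem_filter.mp hj).2
      have := hc' j
      rw [← Finset.sum_filter_add_sum_filter_not univ (fun k => (τ k).isLeft)
        (fun k => c k * M (τ k) j)] at this
      have hright : (∑ k ∈ univ.filter (fun k => ¬ (τ k).isLeft),
          c k * M (τ k) j) = 0 := by
        apply Finset.sum_eq_zero
        intro k hk
        have hk' := (Finset.mem_filter.mp hk).2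
        rcases Sum.isRight_iff.mp (Sum.not_isLeft.mp hk') with ⟨i, hi⟩
        rw [hi, hMB, if_neg (hfree k i hi), mul_zero]
      rw [hright, add_zero] at this
      rw [← this]
      apply Finset.sum_congr rfl
      intro k hk
      rcases Sum.isLeft_iff.mp (Finset.mem_filter.mp hk).2 with ⟨i, hi⟩
      rw [haa]
      simp only [hi, Sum.elim_inl]
      rw [hMA]
  -- step 2: c vanishes everywhere
  funext k
  rcases hk : τ k with i | i
  · exact hstep1 k (Finset.mem_filter.mpr ⟨Finset.mem_univ _, by rw [hk]; simp⟩)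
  · -- use column j = i (castLE)
    set j : Fin t := ⟨(i : ℕ), lt_of_lt_of_le i.isLt hrt⟩ with hj
    have := hc' j
    rw [Finset.sum_eq_single_of_mem k (Finset.mem_univ k)] at this
    · rw [hk, hMB, if_pos rfl] at this
      simpa using this
    · intro k' _ hkk'
      rcases hk' : τ k' with i' | i'
      · rw [hstep1 k' (Finset.mem_filter.mpr ⟨Finset.mem_univ _, by rw [hk']; simp⟩), zero_mul]
      · rw [hMB]
        have hne2 : ¬ ((j : ℕ) = (i' : ℕ)) := by
          intro hEq
          have hii : i = i' := Fin.ext (by rw [← hEq])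
          subst hii
          exact hkk' (hτ (hk'.trans hk.symm))
        rw [if_neg hne2, mul_zero]
end

section
/- Under the hypotheses of the previous construction (t - s < r ≤ t, A an s×t Cauchy matrix, M the (s+r)×t stack of A over [-I_r | 0]), the linear code C = {c ∈ F^{s+r} : c · M = 0} (i.e., the kernel of M^T) has dimension s + r - t and minimum Hamming distance t + 1; hence it is an MDS code. -/
open Polynomial Finset

lemma cauchy_kernel {F : Type*} [Field F] {m n : Type*} [Fintype m] [Fintype n] [DecidableEq n]
    (a : m → F) (b : n → F) (ha : Function.Injective a) (hb : Function.Injective b)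
    (hab : ∀ i j, a i ≠ b j) (hcard : Fintype.card n ≤ Fintype.card m)
    (v : n → F) (hv : ∀ i, ∑ j, v j * (a i - b j)⁻¹ = 0) : v = 0 := by
  rcases isEmpty_or_nonempty n with hn | hn
  · exact funext fun j => absurd (IsEmpty.false j) (by simp)
  set P : F[X] := ∑ j, C (v j) * ∏ k ∈ univ.erase j, (X - C (b k)) with hP
  have hdeg : P.natDegree < Fintype.card m := by
    have : P.natDegree ≤ Fintype.card n - 1 := by
      apply Polynomial.natDegree_sum_le_of_forall_le
      intro j _
      refine le_trans (Polynomial.natDegree_mul_le) ?_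
      simp only [Polynomial.natDegree_C, zero_add]
      refine le_trans (Polynomial.natDegree_prod_le _ _) ?_
      have heq : ∑ k ∈ univ.erase j, (X - C (b k)).natDegree = (univ.erase j).card := by
        rw [Finset.card_eq_sum_ones]
        exact Finset.sum_congr rfl fun k _ => Polynomial.natDegree_X_sub_C _
      rw [heq, Finset.card_erase_of_mem (mem_univ j), Finset.card_univ]
    have h1 : 1 ≤ Fintype.card n := Fintype.card_pos
    omega
  have heval : ∀ i, P.eval (a i) = 0 := by
    intro i
    have hPe : P.eval (a i) = ∑ j, v j * ∏ k ∈ univ.erase j, (a i - b k) := by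
      simp [hP, Polynomial.eval_finset_sum, Polynomial.eval_prod]
    rw [hPe]
    have : ∀ j ∈ univ, v j * ∏ k ∈ univ.erase j, (a i - b k)
        = (∏ k, (a i - b k)) * (v j * (a i - b j)⁻¹) := by
      intro j _
      have hprod : ∏ k, (a i - b k) = (a i - b j) * ∏ k ∈ univ.erase j, (a i - b k) :=
        (Finset.mul_prod_erase univ _ (mem_univ j)).symm
      have hne : a i - b j ≠ 0 := sub_ne_zero.mpr (hab i j)
      rw [hprod]
      field_simp
    rw [Finset.sum_congr rfl this, ← Finset.mul_sum, hv i, mul_zero]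
  have hP0 : P = 0 :=
    Polynomial.eq_zero_of_natDegree_lt_card_of_eval_eq_zero P ha heval hdeg
  funext j
  have : P.eval (b j) = v j * ∏ k ∈ univ.erase j, (b j - b k) := by
    rw [hP, Polynomial.eval_finset_sum]
    rw [Finset.sum_eq_single j]
    · simp [Polynomial.eval_prod]
    · intro j' _ hj'
      have : ∏ k ∈ univ.erase j', (b j - b k) = 0 :=
        Finset.prod_eq_zero (Finset.mem_erase.mpr ⟨hj'.symm, mem_univ j⟩) (by simp)
      simp [Polynomial.eval_prod, this]
    · simp
  rw [hP0] at this
  simp only [Polynomial.eval_zero] at this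
  have hprod : ∏ k ∈ univ.erase j, (b j - b k) ≠ 0 := by
    apply Finset.prod_ne_zero_iff.mpr
    intro k hk
    exact sub_ne_zero.mpr fun h => (Finset.mem_erase.mp hk).1 (hb h.symm)
  have := this.symm
  rcases mul_eq_zero.mp this with h | h
  · exact h
  · exact absurd h hprod

lemma fin_subtype_card_ge (N c : ℕ) : Fintype.card {j : Fin N // c ≤ (j : ℕ)} = N - c := by
  have e : {j : Fin N // c ≤ (j : ℕ)} ≃ Fin (N - c) :=
    { toFun := fun j => ⟨(j.1 : ℕ) - c, by have := j.1.2; have := j.2; omega⟩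
      invFun := fun j => ⟨⟨c + (j : ℕ), by have := j.2; omega⟩, by simp⟩
      left_inv := fun j => by
        apply Subtype.ext; apply Fin.ext; have := j.2; simp; omega
      right_inv := fun j => by apply Fin.ext; simp }
  rw [Fintype.card_congr e, Fintype.card_fin]

lemma fin_subtype_card_lt (N c : ℕ) (h : c ≤ N) :
    Fintype.card {j : Fin N // (j : ℕ) < c} = c := by
  have e : {j : Fin N // (j : ℕ) < c} ≃ Fin c :=
    { toFun := fun j => ⟨(j.1 : ℕ), j.2⟩
      invFun := fun j => ⟨⟨(j : ℕ), by have := j.2; omega⟩, by simpa using j.2⟩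
      left_inv := fun j => by apply Subtype.ext; apply Fin.ext; simp
      right_inv := fun j => by apply Fin.ext; simp }
  rw [Fintype.card_congr e, Fintype.card_fin]

lemma sum_restrict {F : Type*} [Field F] {N : Type*} [Fintype N] (p : N → Prop)
    [DecidablePred p] (f : N → F) (h0 : ∀ i, ¬ p i → f i = 0) :
    ∑ i : {i // p i}, f i.1 = ∑ i, f i := by
  rw [← Finset.sum_subtype (Finset.univ.filter p) (by simp) f]
  exact Finset.sum_filter_of_ne (fun i _ hf => by
    by_contra hp; exact hf (h0 i hp))

lemma sum_delta {F : Type*} [Field F] {r t : ℕ} (hrt : r ≤ t) (y : Fin r → F) (j : Fin t) :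
    ∑ i : Fin r, y i * (if (j : ℕ) = (i : ℕ) then (-1 : F) else 0)
      = if h : (j : ℕ) < r then -y ⟨(j : ℕ), h⟩ else 0 := by
  by_cases h : (j : ℕ) < r
  · rw [dif_pos h, Finset.sum_eq_single (⟨(j : ℕ), h⟩ : Fin r)]
    · simp
    · intro i _ hne
      rw [if_neg (fun hh => hne (Fin.ext hh.symm)), mul_zero]
    · intro hh; exact absurd (Finset.mem_univ _) hh
  · rw [dif_neg h]
    apply Finset.sum_eq_zero
    intro i _
    rw [if_neg (by have := i.2; omega), mul_zero]

/-- Lemma 1: the left kernel of the stack of an s×t Cauchy matrix over [-I_r | 0]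
is an (s+r, s+r-t, t+1) MDS code. -/
theorem cauchy_stack_code_parameters {F : Type*} [Field F] [Fintype F] [DecidableEq F]
    {s t r : ℕ} (hts : t - s < r) (hrt : r ≤ t)
    (a : Fin s → F) (b : Fin t → F)
    (ha : Function.Injective a) (hb : Function.Injective b)
    (hab : ∀ i j, a i ≠ b j)
    (M : Matrix (Fin s ⊕ Fin r) (Fin t) F)
    (hMA : ∀ (i : Fin s) (j : Fin t), M (Sum.inl i) j = (a i - b j)⁻¹)
    (hMB : ∀ (i : Fin r) (j : Fin t), M (Sum.inr i) j = if (j : ℕ) = (i : ℕ) then -1 else 0) :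
    Module.finrank F (LinearMap.ker M.vecMulLinear) = s + r - t ∧
      (∀ c, c ∈ LinearMap.ker M.vecMulLinear → c ≠ 0 → t + 1 ≤ hammingNorm c) ∧
      (∃ c, c ∈ LinearMap.ker M.vecMulLinear ∧ c ≠ 0 ∧ hammingNorm c = t + 1) := by
  classical
  -- description of vecMul
  have hvm : ∀ (c : (Fin s ⊕ Fin r) → F) (j : Fin t), M.vecMulLinear c j =
      (∑ i : Fin s, c (Sum.inl i) * (a i - b j)⁻¹) +
        (if h : (j : ℕ) < r then -c (Sum.inr ⟨(j : ℕ), h⟩) else 0) := by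
    intro c j
    have h1 : M.vecMulLinear c j = ∑ i : Fin s ⊕ Fin r, c i * M i j := by
      simp [Matrix.vecMulLinear_apply, Matrix.vecMul, dotProduct]
    rw [h1, Fintype.sum_sum_type]
    congr 1
    · exact Finset.sum_congr rfl fun i _ => by rw [hMA]
    · rw [Finset.sum_congr rfl (fun i _ => by rw [hMB i j]),
        sum_delta hrt (fun i => c (Sum.inr i)) j]
  -- injectivity of mulVecLin
  have hinj : Function.Injective M.mulVecLin := by
    rw [← LinearMap.ker_eq_bot, LinearMap.ker_eq_bot']
    intro v hv0
    have hv : ∀ i, M.mulVec v i = 0 := fun i => congrFun hv0 i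
    have hzero_lt : ∀ j : Fin t, (j : ℕ) < r → v j = 0 := by
      intro j hj
      have h1 := hv (Sum.inr ⟨(j : ℕ), hj⟩)
      have h2 : M.mulVec v (Sum.inr ⟨(j : ℕ), hj⟩)
          = ∑ j' : Fin t, (if (j' : ℕ) = (j : ℕ) then (-1 : F) else 0) * v j' := by
        simp only [Matrix.mulVec, dotProduct]
        exact Finset.sum_congr rfl fun j' _ => by rw [hMB]
      rw [h2, Finset.sum_eq_single j] at h1
      · simpa using h1
      · intro j' _ hne
        rw [if_neg (fun hh => hne (Fin.ext hh)), zero_mul]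
      · intro hh; exact absurd (Finset.mem_univ _) hh
    have key : ∀ i : Fin s, ∑ j : {j : Fin t // r ≤ (j : ℕ)}, v j.1 * (a i - b j.1)⁻¹ = 0 := by
      intro i
      have h1 := hv (Sum.inl i)
      have h2 : M.mulVec v (Sum.inl i) = ∑ j, (a i - b j)⁻¹ * v j := by
        simp only [Matrix.mulVec, dotProduct]
        exact Finset.sum_congr rfl fun j _ => by rw [hMA]
      rw [h2] at h1
      have h3 : ∑ j : {j : Fin t // r ≤ (j : ℕ)}, v j.1 * (a i - b j.1)⁻¹
          = ∑ j, v j * (a i - b j)⁻¹ :=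
        sum_restrict (fun j : Fin t => r ≤ (j : ℕ)) (fun j => v j * (a i - b j)⁻¹)
          (fun j hj => by show v j * (a i - b j)⁻¹ = 0; rw [hzero_lt j (by omega), zero_mul])
      rw [h3, Finset.sum_congr rfl fun j _ => mul_comm (v j) ((a i - b j)⁻¹)]
      exact h1
    have hcard : Fintype.card {j : Fin t // r ≤ (j : ℕ)} ≤ Fintype.card (Fin s) := by
      rw [fin_subtype_card_ge, Fintype.card_fin]; omega
    have hz := cauchy_kernel a (fun j : {j : Fin t // r ≤ (j : ℕ)} => b j.1) ha
      (fun j1 j2 h => Subtype.ext (hb h)) (fun i j => hab i j.1) hcard _ key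
    funext j
    by_cases hj : (j : ℕ) < r
    · exact hzero_lt j hj
    · have := congrFun hz ⟨j, by omega⟩
      simpa using this
  -- part 1 : dimension
  have hdim : Module.finrank F (LinearMap.ker M.vecMulLinear) = s + r - t := by
    have h1 : M.transpose.mulVecLin = M.vecMulLinear := Matrix.mulVecLin_transpose M
    have h2 := LinearMap.finrank_range_add_finrank_ker (M.transpose.mulVecLin)
    have h3 : Module.finrank F ((Fin s ⊕ Fin r) → F) = s + r := by simp
    have h5 := LinearMap.finrank_range_add_finrank_ker (M.mulVecLin)
    rw [LinearMap.ker_eq_bot.mpr hinj, finrank_bot] at h5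
    have h6 : Module.finrank F (Fin t → F) = t := by simp
    have h7 : M.transpose.rank = M.rank := Matrix.rank_transpose M
    unfold Matrix.rank at h7
    rw [h1] at h2 h7
    rw [h3] at h2
    rw [h6] at h5
    omega
  -- norm splitting
  have hnorm : ∀ c : (Fin s ⊕ Fin r) → F, hammingNorm c =
      (univ.filter (fun i : Fin s => c (Sum.inl i) ≠ 0)).card +
        (univ.filter (fun i : Fin r => c (Sum.inr i) ≠ 0)).card := by
    intro c
    show (univ.filter (fun i => c i ≠ 0)).card = _
    rw [Finset.card_filter, Fintype.sum_sum_type, ← Finset.card_filter, ← Finset.card_filter]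
  -- part 2 : minimum distance
  have hmin : ∀ c, c ∈ LinearMap.ker M.vecMulLinear → hammingNorm c ≤ t → c = 0 := by
    intro c hc hle
    set x : Fin s → F := fun i => c (Sum.inl i) with hxdef
    set y : Fin r → F := fun i => c (Sum.inr i) with hydef
    have hker : ∀ j, M.vecMulLinear c j = 0 := fun j => congrFun (LinearMap.mem_ker.mp hc) j
    have heq : ∀ j : Fin t, (∑ i, x i * (a i - b j)⁻¹)
        = (if h : (j : ℕ) < r then y ⟨(j : ℕ), h⟩ else 0) := by
      intro j
      have h0 := hker j
      rw [hvm] at h0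
      by_cases h : (j : ℕ) < r
      · rw [dif_pos h] at h0 ⊢
        exact add_neg_eq_zero.mp h0
      · rw [dif_neg h] at h0 ⊢
        rwa [add_zero] at h0
    set S := Finset.univ.filter (fun i : Fin s => x i ≠ 0) with hS
    set U := Finset.univ.filter (fun i : Fin r => y i ≠ 0) with hU
    have hSU : S.card + U.card ≤ t := by rw [hnorm c] at hle; exact hle
    set U' : Finset (Fin t) := U.image (Fin.castLE hrt) with hU'
    have hU'card : U'.card = U.card :=
      Finset.card_image_of_injective U (Fin.strictMono_castLE hrt).injective
    have hrows : ∀ j : Fin t, j ∉ U' → ∑ i : Fin s, x i * (a i - b j)⁻¹ = 0 := by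
      intro j hj
      rw [heq j]
      by_cases h : (j : ℕ) < r
      · rw [dif_pos h]
        by_contra hy
        have hmem : (⟨(j : ℕ), h⟩ : Fin r) ∈ U := Finset.mem_filter.mpr ⟨mem_univ _, hy⟩
        exact hj (Finset.mem_image.mpr ⟨⟨(j : ℕ), h⟩, hmem, Fin.ext rfl⟩)
      · rw [dif_neg h]
    have hcard2 : Fintype.card {i : Fin s // x i ≠ 0} ≤ Fintype.card {j : Fin t // j ∉ U'} := by
      rw [Fintype.card_subtype, Fintype.card_subtype]
      have e2 : (univ.filter (fun j : Fin t => j ∉ U')).card = t - U'.card := by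
        rw [Finset.filter_not, Finset.filter_univ_mem,
          Finset.card_sdiff_of_subset (Finset.subset_univ _), Finset.card_univ, Fintype.card_fin]
      rw [e2, ← hS]
      omega
    have key2 : ∀ jj : {j : Fin t // j ∉ U'},
        ∑ ii : {i : Fin s // x i ≠ 0}, x ii.1 * (b jj.1 - a ii.1)⁻¹ = 0 := by
      intro jj
      have h0 := hrows jj.1 jj.2
      have hfull : ∑ i : Fin s, x i * (b jj.1 - a i)⁻¹ = 0 := by
        have : ∑ i : Fin s, x i * (b jj.1 - a i)⁻¹
            = -∑ i : Fin s, x i * (a i - b jj.1)⁻¹ := by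
          rw [← Finset.sum_neg_distrib]
          refine Finset.sum_congr rfl fun i _ => ?_
          rw [← neg_sub (a i) (b jj.1), inv_neg, mul_neg]
        rw [this, h0, neg_zero]
      exact (sum_restrict (fun i : Fin s => x i ≠ 0) (fun i => x i * (b jj.1 - a i)⁻¹)
        (fun i hi => by
          show x i * _ = 0
          rw [not_not.mp hi, zero_mul])).trans hfull
    have hx0 : (fun ii : {i : Fin s // x i ≠ 0} => x ii.1) = 0 :=
      cauchy_kernel (fun j : {j : Fin t // j ∉ U'} => b j.1)
        (fun i : {i : Fin s // x i ≠ 0} => a i.1)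
        (fun j1 j2 h => Subtype.ext (hb h)) (fun i1 i2 h => Subtype.ext (ha h))
        (fun jj ii => (hab ii.1 jj.1).symm) hcard2 _ key2
    have hxall : ∀ i : Fin s, x i = 0 := by
      intro i
      by_cases hi : x i = 0
      · exact hi
      · simpa using congrFun hx0 ⟨i, hi⟩
    have hyall : ∀ i : Fin r, y i = 0 := by
      intro i
      have h0 := heq (Fin.castLE hrt i)
      rw [Finset.sum_eq_zero (fun i' _ => by rw [hxall i', zero_mul])] at h0
      rw [dif_pos (by simpa using i.2)] at h0
      have : (⟨((Fin.castLE hrt i : Fin t) : ℕ), by simpa using i.2⟩ : Fin r) = i :=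
        Fin.ext rfl
      rw [this] at h0
      exact h0.symm
    funext i
    cases i with
    | inl i => exact hxall i
    | inr i => exact hyall i
  have hdist : ∀ c, c ∈ LinearMap.ker M.vecMulLinear → c ≠ 0 → t + 1 ≤ hammingNorm c := by
    intro c hc hne
    by_contra hlt
    push_neg at hlt
    exact hne (hmin c hc (by omega))
  -- part 3 : existence
  refine ⟨hdim, hdist, ?_⟩
  have hks : t - r + 1 ≤ s := by omega
  set B : Matrix (Fin (t - r)) {i : Fin s // (i : ℕ) < t - r + 1} F :=
    fun j i => (a i.1 - b ⟨r + (j : ℕ), by have := j.2; omega⟩)⁻¹ with hB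
  have hfrlt : Module.finrank F (Fin (t - r) → F)
      < Module.finrank F ({i : Fin s // (i : ℕ) < t - r + 1} → F) := by
    have c1 : Module.finrank F (Fin (t - r) → F) = t - r := by simp
    have c2 : Module.finrank F ({i : Fin s // (i : ℕ) < t - r + 1} → F) = t - r + 1 := by
      rw [Module.finrank_fintype_fun_eq_card, fin_subtype_card_lt s (t - r + 1) hks]
    omega
  have hkb := LinearMap.ker_ne_bot_of_finrank_lt (f := B.mulVecLin) hfrlt
  obtain ⟨w, hw, hw0⟩ := (Submodule.ne_bot_iff _).mp hkb
  set x : Fin s → F := fun i => if h : (i : ℕ) < t - r + 1 then w ⟨i, h⟩ else 0 with hxdef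
  set y : Fin r → F := fun i => ∑ i', x i' * (a i' - b (Fin.castLE hrt i))⁻¹ with hydef
  set c : (Fin s ⊕ Fin r) → F := Sum.elim x y with hcdef
  have hcker : c ∈ LinearMap.ker M.vecMulLinear := by
    rw [LinearMap.mem_ker]
    funext j
    rw [Pi.zero_apply, hvm]
    show (∑ i : Fin s, x i * (a i - b j)⁻¹) + (if h : (j : ℕ) < r then -y ⟨(j : ℕ), h⟩ else 0) = 0
    by_cases h : (j : ℕ) < r
    · rw [dif_pos h]
      have hcast : Fin.castLE hrt (⟨(j : ℕ), h⟩ : Fin r) = j := Fin.ext rfl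
      have : y ⟨(j : ℕ), h⟩ = ∑ i, x i * (a i - b j)⁻¹ := by
        rw [hydef]; simp only [hcast]
      rw [this, add_neg_cancel]
    · rw [dif_neg h, add_zero]
      have hrs := sum_restrict (fun i : Fin s => (i : ℕ) < t - r + 1)
        (fun i => x i * (a i - b j)⁻¹)
        (fun i hi => by
          show x i * _ = 0
          rw [hxdef]; simp only [dif_neg hi, zero_mul])
      rw [← hrs]
      have hmv : B.mulVec w = 0 := LinearMap.mem_ker.mp hw
      have h2 := congrFun hmv ⟨(j : ℕ) - r, by have := j.2; omega⟩
      have h3 : B.mulVec w ⟨(j : ℕ) - r, by have := j.2; omega⟩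
          = ∑ i : {i : Fin s // (i : ℕ) < t - r + 1}, x i.1 * (a i.1 - b j)⁻¹ := by
        simp only [Matrix.mulVec, dotProduct]
        refine Finset.sum_congr rfl fun i _ => ?_
        have hbj : (⟨r + ((j : ℕ) - r), by have := j.2; omega⟩ : Fin t) = j := by
          apply Fin.ext; simp; omega
        rw [hB]
        simp only [hbj]
        rw [mul_comm]
        congr 1
        rw [hxdef]
        simp only [dif_pos i.2]
      rw [← h3, h2]
      rfl
  have hcx : ∀ i : {i : Fin s // (i : ℕ) < t - r + 1}, c (Sum.inl i.1) = w i := by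
    intro i
    show x i.1 = w i
    rw [hxdef]; simp only [dif_pos i.2]
  obtain ⟨i₀, hi₀⟩ := Function.ne_iff.mp hw0
  have hcne : c ≠ 0 := by
    intro h0
    apply hi₀
    have := congrFun h0 (Sum.inl i₀.1)
    rw [hcx i₀] at this
    simpa using this
  refine ⟨c, hcker, hcne, ?_⟩
  have hub : hammingNorm c ≤ t + 1 := by
    rw [hnorm c]
    have h1 : (univ.filter (fun i : Fin s => c (Sum.inl i) ≠ 0)).card ≤ t - r + 1 := by
      have hsub : univ.filter (fun i : Fin s => c (Sum.inl i) ≠ 0)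
          ⊆ univ.filter (fun i : Fin s => (i : ℕ) < t - r + 1) := by
        intro i hi
        rw [Finset.mem_filter] at hi ⊢
        refine ⟨mem_univ _, ?_⟩
        by_contra hlt
        apply hi.2
        show x i = 0
        rw [hxdef]; simp only [dif_neg hlt]
      have hcardf : (univ.filter (fun i : Fin s => (i : ℕ) < t - r + 1)).card = t - r + 1 := by
        rw [← Fintype.card_subtype, fin_subtype_card_lt s (t - r + 1) hks]
      rw [← hcardf]
      exact Finset.card_le_card hsub
    have h2 : (univ.filter (fun i : Fin r => c (Sum.inr i) ≠ 0)).card ≤ r := by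
      calc (univ.filter (fun i : Fin r => c (Sum.inr i) ≠ 0)).card
          ≤ (univ : Finset (Fin r)).card := Finset.card_le_card (Finset.filter_subset _ _)
        _ = r := by simp
    omega
  have hlb := hdist c hcker hcne
  omega
end

section
/- If M is an n×k matrix over a field such that every k×k submatrix (every choice of k rows) is invertible, then the linear code generated by the columns of M (i.e., the image of the map x ↦ M·x from F^k to F^n) is an MDS code of dimension k and minimum distance n - k + 1: every nonzero codeword has at most k - 1 zero coordinates. -/
/-- If every k×k row-submatrix of an n×k matrix is invertible, then the code generated
by its columns is MDS: the encoding map is injective and every nonzero codeword has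
Hamming weight at least n - k + 1. -/
theorem mds_of_all_row_submatrices_invertible {F : Type*} [Field F] [DecidableEq F]
    {n k : ℕ} (hkn : k ≤ n) (M : Matrix (Fin n) (Fin k) F)
    (h : ∀ ρ : Fin k → Fin n, Function.Injective ρ → IsUnit (M.submatrix ρ id)) :
    Function.Injective M.mulVec ∧
      ∀ x : Fin k → F, x ≠ 0 → n - k + 1 ≤ hammingNorm (M.mulVec x) := by
  have key : ∀ (ρ : Fin k → Fin n), Function.Injective ρ → ∀ x : Fin k → F,
      (∀ j, M.mulVec x (ρ j) = 0) → x = 0 := by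
    intro ρ hρ x hx
    have hinj := Matrix.mulVec_injective_iff_isUnit.mpr (h ρ hρ)
    have h0 : (M.submatrix ρ id).mulVec x = 0 := by
      funext j
      simpa [Matrix.mulVec, Matrix.submatrix, dotProduct] using hx j
    have := hinj (a₁ := x) (a₂ := 0) (by simpa using h0)
    simpa using this
  constructor
  · intro x y hxy
    have := key (Fin.castLE hkn) (Fin.castLE_injective hkn) (x - y) ?_
    · exact sub_eq_zero.mp this
    · intro j
      simp [Matrix.mulVec_sub, hxy]
  · intro x hx
    by_contra hlt
    push_neg at hlt
    have hnorm : hammingNorm (M.mulVec x) ≤ n - k := by omega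
    -- zero set has at least k elements
    set Z : Finset (Fin n) := Finset.univ.filter (fun i => M.mulVec x i = 0) with hZ
    have hcard : k ≤ Z.card := by
      have h1 : (Finset.univ.filter (fun i => M.mulVec x i ≠ 0)).card ≤ n - k := by
        simpa [hammingNorm] using hnorm
      have h2 : Z.card + (Finset.univ.filter (fun i => M.mulVec x i ≠ 0)).card = n := by
        rw [hZ]
        simpa using Finset.card_filter_add_card_filter_not
          (s := (Finset.univ : Finset (Fin n))) (p := fun i => M.mulVec x i = 0)
      omega
    obtain ⟨s, hsub, hscard⟩ := Finset.exists_subset_card_eq hcard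
    let e : Fin k ≃ {i // i ∈ s} := (s.equivFin.trans (finCongr hscard)).symm
    have hρ : Function.Injective (fun j => (e j : Fin n)) :=
      Subtype.val_injective.comp e.injective
    refine hx (key _ hρ x fun j => ?_)
    have : (e j : Fin n) ∈ Z := hsub (e j).2
    simpa [hZ] using this
end

section
/- Generalized Singleton-type fact used in Lemma 1's proof: if an s×t Cauchy matrix A (all parameters distinct) is stacked over [-I_r | 0_{r×(t-r)}] with t - s < r ≤ t, then no t rows of the resulting (s+r)×t matrix are linearly dependent; equivalently, for any choice of a rows from A and t - a rows from [-I_r|0] (with 0 ≤ t - a ≤ r), the resulting t×t matrix is invertible, because deleting the columns hit by the identity rows leaves an a×a submatrix of A which is invertible. -/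
open Polynomial Finset

lemma cauchy_isUnit {F : Type*} [Field F] {ι : Type*} [Fintype ι] [DecidableEq ι]
    (a b : ι → F) (ha : Function.Injective a) (hb : Function.Injective b)
    (hab : ∀ i j, a i ≠ b j) :
    IsUnit (Matrix.of fun i j : ι => (a i - b j)⁻¹) := by
  rw [← Matrix.mulVec_injective_iff_isUnit]
  have key : ∀ v : ι → F, (Matrix.of fun i j : ι => (a i - b j)⁻¹).mulVec v = 0 → v = 0 := by
    intro v hv
    set P : F[X] := ∑ j : ι, Polynomial.C (v j) * ∏ k ∈ univ.erase j, (X - Polynomial.C (b k))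
      with hP
    have hsub : ∀ i j, a i - b j ≠ 0 := fun i j => sub_ne_zero.mpr (hab i j)
    have heval : ∀ i : ι, P.eval (a i) = 0 := by
      intro i
      have h0 : ∑ j : ι, (a i - b j)⁻¹ * v j = 0 := congrFun hv i
      have : P.eval (a i) = (∏ k : ι, (a i - b k)) * ∑ j : ι, (a i - b j)⁻¹ * v j := by
        rw [hP, Finset.mul_sum]
        simp only [eval_finset_sum, eval_mul, eval_C, eval_prod, eval_sub, eval_X]
        refine Finset.sum_congr rfl fun j _ => ?_
        rw [← Finset.mul_prod_erase univ _ (mem_univ j)]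
        field_simp [hsub i j]
      rw [this, h0, mul_zero]
    have hdeg : P = 0 := by
      rcases isEmpty_or_nonempty ι with h | h
      · simp [hP]
      · refine Polynomial.eq_zero_of_natDegree_lt_card_of_eval_eq_zero P ha heval ?_
        have : P.natDegree ≤ Fintype.card ι - 1 := by
          refine Polynomial.natDegree_sum_le_of_forall_le _ _ fun j _ => ?_
          refine (natDegree_mul_le).trans ?_
          simp only [natDegree_C, zero_add]
          refine (Polynomial.natDegree_prod_le _ _).trans ?_
          simp only [Polynomial.natDegree_X_sub_C]
          rw [Finset.sum_const, smul_eq_mul, mul_one,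
            Finset.card_erase_of_mem (mem_univ j), Finset.card_univ]
        have hpos : 0 < Fintype.card ι := Fintype.card_pos
        omega
    funext j
    have := congrArg (Polynomial.eval (b j)) hdeg
    rw [hP] at this
    simp only [eval_finset_sum, eval_mul, eval_C, eval_prod, eval_sub, eval_X, eval_zero] at this
    rw [Finset.sum_eq_single j] at this
    · have hprod : (∏ k ∈ univ.erase j, (b j - b k)) ≠ 0 := by
        refine Finset.prod_ne_zero_iff.mpr fun k hk => ?_
        exact sub_ne_zero.mpr fun h => (Finset.mem_erase.mp hk).1 (hb h.symm)
      exact (mul_eq_zero.mp this).resolve_right hprod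
    · intro k _ hkj
      rw [Finset.prod_eq_zero (Finset.mem_erase.mpr ⟨hkj.symm, mem_univ j⟩)]
      · ring
      · simp
    · simp
  intro u w h
  have := key (u - w) (by rw [Matrix.mulVec_sub, h, sub_self])
  exact sub_eq_zero.mp this

open Finset

/-- Generalized Singleton-type fact used in Lemma 1's proof: no t rows of the stack
of an s×t Cauchy matrix over [-I_r | 0] are linearly dependent; any injective
selection of t rows gives an invertible t×t matrix. -/
theorem stack_no_t_dependent_rows {F : Type*} [Field F] {s t r : ℕ}
    (hts : t - s < r) (hrt : r ≤ t)
    (a : Fin s → F) (b : Fin t → F)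
    (ha : Function.Injective a) (hb : Function.Injective b)
    (hab : ∀ i j, a i ≠ b j)
    (A : Matrix (Fin s) (Fin t) F) (hA : ∀ i j, A i j = (a i - b j)⁻¹)
    (B : Matrix (Fin r) (Fin t) F)
    (hB : ∀ i j, B i j = if (j : ℕ) = (i : ℕ) then -1 else 0)
    (M : Matrix (Fin s ⊕ Fin r) (Fin t) F)
    (hM : ∀ x j, M x j = Sum.elim (fun i => A i j) (fun i => B i j) x)
    (τ : Fin t → Fin s ⊕ Fin r) (hτ : Function.Injective τ) :
    IsUnit (M.submatrix τ id) := by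
  classical
  set N := M.submatrix τ id with hN
  rw [← Matrix.mulVec_injective_iff_isUnit]
  suffices key : ∀ v : Fin t → F, N.mulVec v = 0 → v = 0 by
    intro u w h
    have := key (u - w) (by rw [Matrix.mulVec_sub, h, sub_self])
    exact sub_eq_zero.mp this
  intro v hv
  -- Step 1: v vanishes on columns hit by identity rows
  have step1 : ∀ (i : Fin t) (k : Fin r), τ i = Sum.inr k → v (Fin.castLE hrt k) = 0 := by
    intro i k hik
    have h0 : N.mulVec v i = 0 := congrFun hv i
    have h1 : ∑ j : Fin t, (if (j : ℕ) = (k : ℕ) then (-1 : F) else 0) * v j = 0 := by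
      simpa [hN, Matrix.mulVec, dotProduct, Matrix.submatrix, hM, hik, hB] using h0
    rw [Finset.sum_eq_single (Fin.castLE hrt k)] at h1
    · simpa using h1
    · intro j _ hj
      rw [if_neg, zero_mul]
      intro hjk
      exact hj (Fin.ext (by simpa using hjk))
    · simp
  -- row classification
  set Sl := {i : Fin t // (τ i).isLeft} with hSl
  set Sr := {i : Fin t // (τ i).isRight} with hSr
  let ρ : Sl → Fin s := fun i => (τ i.1).getLeft i.2
  have hρ : ∀ i : Sl, τ i.1 = Sum.inl (ρ i) := fun i => (Sum.inl_getLeft _ i.2).symm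
  have injρ : Function.Injective ρ := by
    intro i i' h
    have : τ i.1 = τ i'.1 := by rw [hρ i, hρ i', h]
    exact Subtype.ext (hτ this)
  let γ : Sr → Fin r := fun i => (τ i.1).getRight i.2
  have hγ : ∀ i : Sr, τ i.1 = Sum.inr (γ i) := fun i => (Sum.inr_getRight _ i.2).symm
  let c : Sr → Fin t := fun i => Fin.castLE hrt (γ i)
  have injc : Function.Injective c := by
    intro i i' h
    have hγγ : γ i = γ i' := Fin.ext (by simpa [c, Fin.ext_iff] using h)
    have : τ i.1 = τ i'.1 := by rw [hγ i, hγ i', hγγ]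
    exact Subtype.ext (hτ this)
  have hvc : ∀ i : Sr, v (c i) = 0 := fun i => step1 i.1 (γ i) (hγ i)
  -- the complement columns
  set p : Fin t → Prop := fun j => ∃ i : Sr, c i = j with hp
  set J := {j : Fin t // ¬ p j} with hJ
  -- cardinalities
  have hcard1 : Fintype.card Sr = t - Fintype.card Sl := by
    have e1 : Sr ≃ {i : Fin t // ¬ (τ i).isLeft} :=
      Equiv.subtypeEquivRight fun i => by simp [Sum.not_isLeft]
    rw [Fintype.card_congr e1, Fintype.card_subtype_compl, Fintype.card_fin]
  have hcard2 : Fintype.card {j : Fin t // p j} = Fintype.card Sr :=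
    Fintype.card_congr (Equiv.ofInjective c injc).symm
  have hSlle : Fintype.card Sl ≤ t := by
    have := Fintype.card_subtype_le (fun i : Fin t => (τ i).isLeft)
    simpa using this
  have hSrle : Fintype.card Sr ≤ t := by
    have := Fintype.card_subtype_le (fun i : Fin t => (τ i).isRight)
    simpa using this
  have hcardJ : Fintype.card J = Fintype.card Sl := by
    have h3 : Fintype.card {j : Fin t // ¬ p j} = Fintype.card Sl := by
      rw [Fintype.card_subtype_compl, Fintype.card_fin, hcard2, hcard1]
      omega
    exact h3
  let e : J ≃ Sl := Fintype.equivOfCardEq hcardJ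
  -- Cauchy submatrix
  let a' : J → F := fun x => a (ρ (e x))
  let b' : J → F := fun x => b x.1
  have hC : IsUnit (Matrix.of fun x y : J => (a' x - b' y)⁻¹) := by
    refine cauchy_isUnit a' b' ?_ ?_ ?_
    · exact ha.comp (injρ.comp e.injective)
    · exact hb.comp Subtype.val_injective
    · intro x y; exact hab _ _
  let w : J → F := fun y => v y.1
  have hw : (Matrix.of fun x y : J => (a' x - b' y)⁻¹).mulVec w = 0 := by
    funext x
    have h0 : N.mulVec v (e x).1 = 0 := congrFun hv (e x).1
    have h1 : ∑ j : Fin t, (a' x - b j)⁻¹ * v j = 0 := by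
      simpa [hN, Matrix.mulVec, dotProduct, Matrix.submatrix, hM, hρ (e x), hA, a']
        using h0
    have hzero : ∀ j : Fin t, p j → (a' x - b j)⁻¹ * v j = 0 := by
      rintro j ⟨i, rfl⟩
      rw [hvc i, mul_zero]
    have hsplit : ∑ j : Fin t, (a' x - b j)⁻¹ * v j
        = ∑ y : J, (a' x - b y.1)⁻¹ * v y.1 := by
      rw [← Finset.sum_subtype (univ.filter fun j => ¬ p j)
        (fun j => by simp) (fun j => (a' x - b j)⁻¹ * v j)]
      refine (Finset.sum_subset (Finset.filter_subset _ _) ?_).symm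
      intro j _ hj
      exact hzero j (by simpa using hj)
    have : (Matrix.of fun x y : J => (a' x - b' y)⁻¹).mulVec w x
        = ∑ y : J, (a' x - b y.1)⁻¹ * v y.1 := by
      simp [Matrix.mulVec, dotProduct, w, b']
    rw [this, ← hsplit, h1]
    rfl
  have hwz : w = 0 := by
    have hinj := Matrix.mulVec_injective_iff_isUnit.mpr hC
    have := hinj (a₁ := w) (a₂ := 0) (by rw [hw, Matrix.mulVec_zero])
    exact this
  funext j
  by_cases hpj : p j
  · obtain ⟨i, rfl⟩ := hpj
    exact hvc i
  · exact congrFun hwz ⟨j, hpj⟩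
end

section
/- Global erasure correction capability (Lemma 2, global part, abstracted): suppose code parameters satisfy the setup where H^G = [A | B; -I_r | 0]^T with A an s×t₁ Cauchy block and B an s×δ' block such that [A|B] is an s×(t₁+δ') Cauchy matrix with all parameters distinct and t₁+δ' - s < r ≤ t₁ + δ' (here t₁ = r). Then the code with parity-check H^G corrects any r + δ' erasures: any two length-(s+r) vectors with equal syndrome under H^G and agreeing outside a set of size r + δ' are equal. -/
open Polynomial in
/-- Kernel triviality for (rectangular, tall) Cauchy systems, via the classic
polynomial argument: if `∑ j, c j * (x i - y j)⁻¹ = 0` for all `i`, with all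
parameters distinct, then `c = 0`. -/
lemma cauchy_kernel_zero {F : Type*} [Field F] {ι κ : Type*} [Fintype ι] [Fintype κ]
    (hcard : Fintype.card ι ≤ Fintype.card κ)
    (x : κ → F) (y : ι → F) (hx : Function.Injective x) (hy : Function.Injective y)
    (hxy : ∀ i j, x i ≠ y j) (c : ι → F)
    (h : ∀ i : κ, ∑ j, c j * (x i - y j)⁻¹ = 0) : ∀ j, c j = 0 := by
  classical
  cases isEmpty_or_nonempty ι with
  | inl hempty => exact fun j => isEmptyElim j
  | inr hne =>
    set f : F[X] := ∑ j, C (c j) * ∏ l ∈ Finset.univ.erase j, (X - C (y l)) with hfdef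
    have hcardpos : 0 < Fintype.card ι := Fintype.card_pos
    have hdeg : f.natDegree < Fintype.card ι := by
      have h1 : f.natDegree ≤ Fintype.card ι - 1 := by
        apply natDegree_sum_le_of_forall_le
        intro j _
        refine (natDegree_mul_le).trans ?_
        rw [natDegree_C, zero_add]
        refine (natDegree_prod_le _ _).trans ?_
        have hb1 : ∑ l ∈ Finset.univ.erase j, (X - C (y l)).natDegree
            ≤ ∑ _l ∈ Finset.univ.erase j, 1 :=
          Finset.sum_le_sum (fun l _ => natDegree_X_sub_C_le (y l))
        refine hb1.trans ?_
        rw [Finset.sum_const, smul_eq_mul, mul_one,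
          Finset.card_erase_of_mem (Finset.mem_univ j), Finset.card_univ]
      omega
    have heval : ∀ i : κ, f.eval (x i) = 0 := by
      intro i
      have hP : ∀ j : ι, (∏ l ∈ Finset.univ.erase j, (x i - y l))
          = (x i - y j)⁻¹ * ∏ l, (x i - y l) := by
        intro j
        have hne' : x i - y j ≠ 0 := sub_ne_zero.mpr (hxy i j)
        rw [← Finset.mul_prod_erase Finset.univ _ (Finset.mem_univ j),
          inv_mul_cancel_left₀ hne']
      have : f.eval (x i) = ∑ j, c j * ∏ l ∈ Finset.univ.erase j, (x i - y l) := by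
        simp [hfdef, eval_finset_sum, eval_prod]
      rw [this]
      calc ∑ j, c j * ∏ l ∈ Finset.univ.erase j, (x i - y l)
          = (∑ j, c j * (x i - y j)⁻¹) * ∏ l, (x i - y l) := by
            rw [Finset.sum_mul]
            exact Finset.sum_congr rfl (fun j _ => by rw [hP j, mul_assoc])
        _ = 0 := by rw [h i, zero_mul]
    have hf0 : f = 0 :=
      eq_zero_of_natDegree_lt_card_of_eval_eq_zero f hx heval (lt_of_lt_of_le hdeg hcard)
    intro j
    have h0 : f.eval (y j) = c j * ∏ l ∈ Finset.univ.erase j, (y j - y l) := by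
      simp only [hfdef, eval_finset_sum, eval_mul, eval_C, eval_prod, eval_sub, eval_X]
      rw [Finset.sum_eq_single j]
      · intro j' _ hj'
        apply mul_eq_zero_of_right
        apply Finset.prod_eq_zero (Finset.mem_erase.mpr ⟨Ne.symm hj', Finset.mem_univ j⟩)
        simp
      · intro hj; exact absurd (Finset.mem_univ j) hj
    have hprod : ∏ l ∈ Finset.univ.erase j, (y j - y l) ≠ 0 := by
      rw [Finset.prod_ne_zero_iff]
      intro l hl
      exact sub_ne_zero.mpr (fun he => (Finset.mem_erase.mp hl).1 (hy he).symm)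
    rw [hf0, eval_zero] at h0
    rcases mul_eq_zero.mp h0.symm with h' | h'
    · exact h'
    · exact absurd h' hprod

/-- Key lemma: a vector in the kernel of the column map of `Hᴳ = Mᵀ` supported
on at most `r + δ'` coordinates is zero. -/
lemma global_key {F : Type*} [Field F] {k r δ' : ℕ}
    (a : Fin k → F) (b : Fin (r + δ') → F)
    (ha : Function.Injective a) (hb : Function.Injective b)
    (hab : ∀ i j, a i ≠ b j)
    (M : Matrix (Fin k ⊕ Fin r) (Fin (r + δ')) F)
    (hMA : ∀ (i : Fin k) (j : Fin (r + δ')), M (Sum.inl i) j = (a i - b j)⁻¹)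
    (hMI : ∀ (i : Fin r) (j : Fin (r + δ')),
      M (Sum.inr i) j = if (j : ℕ) = (i : ℕ) then -1 else 0)
    (S : Finset (Fin k ⊕ Fin r)) (hS : S.card ≤ r + δ')
    (z : Fin k ⊕ Fin r → F)
    (hrow : ∀ i : Fin (r + δ'), ∑ j, M j i * z j = 0)
    (hsupp : ∀ j ∉ S, z j = 0) : ∀ j, z j = 0 := by
  classical
  set T : Finset (Fin k) := Finset.univ.filter (fun s => Sum.inl s ∈ S) with hTdef
  set Q : Finset (Fin r) := Finset.univ.filter (fun t => Sum.inr t ∈ S) with hQdef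
  have hcast : r ≤ r + δ' := Nat.le_add_right r δ'
  set Q' : Finset (Fin (r + δ')) := Q.image (Fin.castLE hcast) with hQ'def
  have hQ'card : Q'.card = Q.card :=
    Finset.card_image_of_injective _ (Fin.castLE_injective hcast)
  set J : Finset (Fin (r + δ')) := Q'ᶜ with hJdef
  have hJcard : J.card = r + δ' - Q.card := by
    rw [hJdef, Finset.card_compl, hQ'card, Fintype.card_fin]
  -- cardinality bookkeeping
  have hTQ : T.card + Q.card ≤ r + δ' := by
    have hdisj : Disjoint (T.image Sum.inl) (Q.image Sum.inr) := by
      rw [Finset.disjoint_left]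
      intro j hj hj'
      obtain ⟨s, _, rfl⟩ := Finset.mem_image.mp hj
      obtain ⟨t, _, hst⟩ := Finset.mem_image.mp hj'
      exact Sum.inl_ne_inr hst.symm
    have hsub : (T.image Sum.inl ∪ Q.image Sum.inr) ⊆ S := by
      intro j hj
      rcases Finset.mem_union.mp hj with hj | hj
      · obtain ⟨s, hs, rfl⟩ := Finset.mem_image.mp hj
        exact (Finset.mem_filter.mp hs).2
      · obtain ⟨t, ht, rfl⟩ := Finset.mem_image.mp hj
        exact (Finset.mem_filter.mp ht).2
    calc T.card + Q.card
        = (T.image Sum.inl).card + (Q.image Sum.inr).card := by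
          rw [Finset.card_image_of_injective _ Sum.inl_injective,
            Finset.card_image_of_injective _ Sum.inr_injective]
      _ = (T.image Sum.inl ∪ Q.image Sum.inr).card :=
          (Finset.card_union_of_disjoint hdisj).symm
      _ ≤ S.card := Finset.card_le_card hsub
      _ ≤ r + δ' := hS
  have hTJ : T.card ≤ J.card := by omega
  -- row equations, split over the sum type
  have hrow' : ∀ i : Fin (r + δ'),
      (∑ s : Fin k, (a s - b i)⁻¹ * z (Sum.inl s)) +
      (∑ t : Fin r, (if (i : ℕ) = (t : ℕ) then (-1 : F) else 0) * z (Sum.inr t)) = 0 := by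
    intro i
    have h := hrow i
    rw [Fintype.sum_sum_type] at h
    simpa only [hMA, hMI] using h
  -- rows away from Q' see only the Cauchy part
  have hcauchyrow : ∀ i : ↥J, ∑ s : ↥T, z (Sum.inl (s : Fin k)) * (b (i : Fin (r + δ')) - a (s : Fin k))⁻¹ = 0 := by
    rintro ⟨i, hiJ⟩
    have h2 : (∑ t : Fin r, (if (i : ℕ) = (t : ℕ) then (-1 : F) else 0) * z (Sum.inr t)) = 0 := by
      apply Finset.sum_eq_zero
      intro t _
      by_cases hit : (i : ℕ) = (t : ℕ)
      · have htQ : t ∉ Q := by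
          intro htQ
          have : Fin.castLE hcast t ∈ Q' := Finset.mem_image_of_mem _ htQ
          have hi' : i = Fin.castLE hcast t := Fin.ext hit
          rw [hJdef, Finset.mem_compl] at hiJ
          exact hiJ (hi' ▸ this)
        have : Sum.inr t ∉ S := fun hc => htQ (Finset.mem_filter.mpr ⟨Finset.mem_univ t, hc⟩)
        rw [hsupp _ this, mul_zero]
      · rw [if_neg hit, zero_mul]
    have h1 : ∑ s : Fin k, (a s - b i)⁻¹ * z (Sum.inl s) = 0 := by
      have := hrow' i
      rw [h2, add_zero] at this
      exact this
    have h1' : ∑ s ∈ T, (a s - b i)⁻¹ * z (Sum.inl s) = 0 := by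
      rw [← h1]
      apply Finset.sum_subset (Finset.subset_univ T)
      intro s _ hsT
      have : Sum.inl s ∉ S := fun hc => hsT (Finset.mem_filter.mpr ⟨Finset.mem_univ s, hc⟩)
      rw [hsupp _ this, mul_zero]
    have h1'' : ∑ s : ↥T, (a (s : Fin k) - b i)⁻¹ * z (Sum.inl (s : Fin k)) = 0 := by
      rw [Finset.univ_eq_attach, Finset.sum_attach T (fun v => (a v - b i)⁻¹ * z (Sum.inl v))]
      exact h1'
    calc ∑ s : ↥T, z (Sum.inl (s : Fin k)) * (b i - a (s : Fin k))⁻¹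
        = -∑ s : ↥T, (a (s : Fin k) - b i)⁻¹ * z (Sum.inl (s : Fin k)) := by
          rw [← Finset.sum_neg_distrib]
          apply Finset.sum_congr rfl
          intro s _
          rw [← neg_sub (a (s : Fin k)) (b i), inv_neg]
          ring
      _ = 0 := by rw [h1'', neg_zero]
  -- apply the Cauchy kernel lemma
  have hzT : ∀ s : ↥T, z (Sum.inl (s : Fin k)) = 0 := by
    apply cauchy_kernel_zero (x := fun i : ↥J => b (i : Fin (r + δ')))
      (y := fun s : ↥T => a (s : Fin k))
    · rw [Fintype.card_coe, Fintype.card_coe]; exact hTJ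
    · exact fun i i' hii => Subtype.ext (hb hii)
    · exact fun s s' hss => Subtype.ext (ha hss)
    · exact fun i s h => hab (s : Fin k) (i : Fin (r + δ')) h.symm
    · exact hcauchyrow
  have hzl : ∀ s : Fin k, z (Sum.inl s) = 0 := by
    intro s
    by_cases hsT : s ∈ T
    · exact hzT ⟨s, hsT⟩
    · exact hsupp _ (fun hc => hsT (Finset.mem_filter.mpr ⟨Finset.mem_univ s, hc⟩))
  have hzr : ∀ t : Fin r, z (Sum.inr t) = 0 := by
    intro t
    have h := hrow' (Fin.castLE hcast t)
    rw [Finset.sum_eq_zero (fun s _ => by rw [hzl s, mul_zero]), zero_add] at h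
    rw [Finset.sum_eq_single t] at h
    · simpa using h
    · intro t' _ htt'
      have hne2 : ¬ ((Fin.castLE hcast t : Fin (r + δ')) : ℕ) = (t' : ℕ) := by
        simp only [Fin.coe_castLE]
        exact fun hc => htt' (Fin.ext hc).symm
      rw [if_neg hne2, zero_mul]
    · intro ht; exact absurd (Finset.mem_univ t) ht
  intro j
  cases j with
  | inl s => exact hzl s
  | inr t => exact hzr t

/-- Lemma 2, global part (abstracted): the parity-check matrix H^G, the transpose of
the stack of a k×(r+δ') Cauchy matrix over [-I_r | 0], corrects any r + δ' erasures:
two vectors of length k+r with equal syndrome agreeing outside a set of size r+δ'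
are equal. Moreover every (r+δ')-subset of columns of H^G is linearly independent. -/
theorem global_erasure_correction {F : Type*} [Field F] {k r δ' : ℕ}
    (hcond : r + δ' - k < r)
    (a : Fin k → F) (b : Fin (r + δ') → F)
    (ha : Function.Injective a) (hb : Function.Injective b)
    (hab : ∀ i j, a i ≠ b j)
    (M : Matrix (Fin k ⊕ Fin r) (Fin (r + δ')) F)
    (hMA : ∀ (i : Fin k) (j : Fin (r + δ')), M (Sum.inl i) j = (a i - b j)⁻¹)
    (hMI : ∀ (i : Fin r) (j : Fin (r + δ')),
      M (Sum.inr i) j = if (j : ℕ) = (i : ℕ) then -1 else 0) :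
    (∀ S : Finset (Fin k ⊕ Fin r), S.card = r + δ' →
      LinearIndependent F
        (fun j : S => fun i : Fin (r + δ') => M.transpose i (j : Fin k ⊕ Fin r))) ∧
    ∀ S : Finset (Fin k ⊕ Fin r), S.card ≤ r + δ' →
      ∀ x y : Fin k ⊕ Fin r → F,
        M.transpose.mulVec x = M.transpose.mulVec y →
        (∀ i ∉ S, x i = y i) → x = y := by
  classical
  constructor
  · intro S hScard
    rw [Fintype.linearIndependent_iff]
    intro g hg j
    set z : Fin k ⊕ Fin r → F := fun j => if h : j ∈ S then g ⟨j, h⟩ else 0 with hzdef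
    have hrow : ∀ i : Fin (r + δ'), ∑ j', M j' i * z j' = 0 := by
      intro i
      have hgi : ∑ j' : ↥S, g j' * M (j' : Fin k ⊕ Fin r) i = 0 := by
        have := congrFun hg i
        simpa [Finset.sum_apply, Matrix.transpose_apply] using this
      calc ∑ j', M j' i * z j'
          = ∑ j' ∈ S, M j' i * z j' := by
            symm
            apply Finset.sum_subset (Finset.subset_univ S)
            intro j' _ hj'
            rw [hzdef]
            simp [hj']
        _ = ∑ j' : ↥S, M (j' : Fin k ⊕ Fin r) i * z (j' : Fin k ⊕ Fin r) := by
            rw [Finset.univ_eq_attach, Finset.sum_attach S (fun v => M v i * z v)]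
        _ = ∑ j' : ↥S, g j' * M (j' : Fin k ⊕ Fin r) i := by
            apply Finset.sum_congr rfl
            intro j' _
            rw [hzdef]
            simp [j'.2, mul_comm]
        _ = 0 := hgi
    have hzero := global_key a b ha hb hab M hMA hMI S hScard.le z hrow
      (fun j' hj' => by rw [hzdef]; simp [hj'])
    have := hzero (j : Fin k ⊕ Fin r)
    rw [hzdef] at this
    simpa [j.2] using this
  · intro S hS x y hsyn hagree
    have hrow : ∀ i : Fin (r + δ'), ∑ j, M j i * (x j - y j) = 0 := by
      intro i
      have := congrFun hsyn i
      simp only [Matrix.mulVec, dotProduct, Matrix.transpose_apply] at this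
      calc ∑ j, M j i * (x j - y j)
          = (∑ j, M j i * x j) - (∑ j, M j i * y j) := by
            rw [← Finset.sum_sub_distrib]
            exact Finset.sum_congr rfl (fun j _ => by ring)
        _ = 0 := by rw [this, sub_self]
    have hzero := global_key a b ha hb hab M hMA hMI S hS
      (fun j => x j - y j) hrow (fun j hj => sub_eq_zero.mpr (hagree j hj))
    funext j
    exact sub_eq_zero.mp (hzero j)
end
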